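/- Let δ₂ = γ₂⁻¹γ₁ where γ₁ = B·[[0,1],[-1,5-2i]]·B⁻¹, γ₂(t) = [[0,1],[-1,5+(t-2)i]], B = [[1,10],[0,1]]. Then the isometric sphere I(δ₂(t)) is contained in the open Euclidean half-ball bounded by the isometric sphere I(γ₁): that is, if z(t) and r(t) are the center and radius of I(δ₂(t)) and z₁, r₁ = 1 those of I(γ₁), then |z(t) - z₁| + r(t) < 1 for all t ∈ [0,4]. -/

import Mathlib

open Complex

/-- Euclidean center `-d/c` of the isometric sphere of a matrix `[[a,b],[c,d]]`. -/
noncomputable def sphereCenter (M : Matrix (Fin 2) (Fin 2) ℂ) : ℂ := -(M 1 1) / M 1 0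

/-- Euclidean radius `1/|c|` of the isometric sphere of a matrix `[[a,b],[c,d]]`. -/
noncomputable def sphereRadius (M : Matrix (Fin 2) (Fin 2) ℂ) : ℝ := 1 / ‖M 1 0‖

/-- `B = [[1,10],[0,1]]`. -/
noncomputable def Bmat : Matrix (Fin 2) (Fin 2) ℂ := !![1, 10; 0, 1]

/-- `γ₁ = B [[0,1],[-1,5-2i]] B⁻¹`. -/
noncomputable def g1 : Matrix (Fin 2) (Fin 2) ℂ :=
  Bmat * !![0, 1; -1, 5 - 2 * Complex.I] * Bmat⁻¹

/-- `γ₂(t) = [[0,1],[-1,5+(t-2)i]]`. -/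
noncomputable def g2 (t : ℝ) : Matrix (Fin 2) (Fin 2) ℂ :=
  !![0, 1; -1, 5 + (t - 2) * Complex.I]

/-- `δ₂(t) = γ₂(t)⁻¹ γ₁`. -/
noncomputable def δ2 (t : ℝ) : Matrix (Fin 2) (Fin 2) ℂ := (g2 t)⁻¹ * g1

/-! Because `γ₂(t)⁻¹` has bottom row `(1, 0)`, the bottom row of `δ₂(t) = γ₂(t)⁻¹ γ₁` is the top
row `(-10, 151 - 20i)` of `γ₁`, whatever `t` is. So `I(δ₂(t))` has center `15.1 - 2i` and radius
`1/10`, while `I(γ₁)` has center `15 - 2i` and radius `1`; and `1/10 + 1/10 < 1`. -/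

section FinTwo

variable {R : Type*} [CommRing R]

lemma inv_translation (s : R) : (!![1, s; 0, 1] : Matrix (Fin 2) (Fin 2) R)⁻¹ = !![1, -s; 0, 1] :=
  Matrix.inv_eq_right_inv (by simp [Matrix.one_fin_two])

lemma inv_zero_one_neg_one (d : R) :
    (!![0, 1; -1, d] : Matrix (Fin 2) (Fin 2) R)⁻¹ = !![d, -1; 1, 0] :=
  Matrix.inv_eq_right_inv (by simp [Matrix.one_fin_two])

lemma mul_row_one_eq_row_zero (a b : R) (N : Matrix (Fin 2) (Fin 2) R) :
    (!![a, b; 1, 0] * N) 1 = N 0 := by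
  ext j
  simp [Matrix.mul_apply, Fin.sum_univ_two]

end FinTwo

lemma g1_eq : g1 = !![-10, 151 - 20 * I; -1, 15 - 2 * I] := by
  rw [g1, Bmat, inv_translation]
  ext i j
  fin_cases i <;> fin_cases j <;> simp [Matrix.mul_apply, Fin.sum_univ_two] <;> ring

lemma δ2_row_one (t : ℝ) : δ2 t 1 = g1 0 := by
  rw [δ2, g2, inv_zero_one_neg_one, mul_row_one_eq_row_zero]

lemma sphereCenter_g1 : sphereCenter g1 = 15 - 2 * I := by
  simp [sphereCenter, g1_eq, div_neg]

lemma sphereRadius_g1 : sphereRadius g1 = 1 := by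
  simp [sphereRadius, g1_eq]

lemma sphereCenter_δ2 (t : ℝ) : sphereCenter (δ2 t) = 15 - 2 * I + 1 / 10 := by
  rw [sphereCenter, δ2_row_one, g1_eq]
  simp only [Matrix.of_apply, Matrix.cons_val', Matrix.cons_val_one, Matrix.cons_val_fin_one,
    Matrix.cons_val_zero]
  ring

lemma sphereRadius_δ2 (t : ℝ) : sphereRadius (δ2 t) = 1 / 10 := by
  simp [sphereRadius, δ2_row_one, g1_eq]

/-- For all `t ∈ [0,4]`, the isometric sphere `I(δ₂(t))` is contained in the open
Euclidean half-ball bounded by `I(γ₁)`: with `z(t), r(t)` the center and radius of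
`I(δ₂(t))` and `z₁, r₁ = 1` those of `I(γ₁)`, one has `|z(t) - z₁| + r(t) < 1`. -/
theorem delta_sphere_contained :
    ∀ t ∈ Set.Icc (0 : ℝ) 4,
      sphereRadius g1 = 1 ∧
      ‖sphereCenter (δ2 t) - sphereCenter g1‖ + sphereRadius (δ2 t) < 1 := by
  intro t _
  refine ⟨sphereRadius_g1, ?_⟩
  rw [sphereCenter_δ2, sphereCenter_g1, sphereRadius_δ2, add_sub_cancel_left]
  norm_num
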